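/- Let T be a tree all of whose nodes are finite. Suppose that for every ordinal α with ω ≤ α < ht(T), either the family of cardinalities ⟨|N| : N a node of T with N ⊆ L_α⟩ is almost constant (that is, all but finitely many nodes N ⊆ L_α have the same cardinality), or the map assigning to each node N ⊆ L_α the pair (|N|, |N↑|) is finite-to-one (that is, for every pair of cardinals only finitely many nodes N ⊆ L_α realize it). Then T is reversible. -/

import Mathlib

/- A tree is a partial order in which the set of strict predecessors of every
element is well-ordered. Basic vocabulary: condensations, automorphisms,
reversibility, heights, levels, nodes, upward closures, branches. -/

universe u v

/- The height of an element `t`: the order type of the set `(·,t)` of its strict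
predecessors (which is well-ordered when the order is a tree). -/
open Classical in
noncomputable def treeHt {T : Type u} [PartialOrder T] (t : T) : Ordinal.{u} :=
  if h : IsWellOrder {s : T // s < t} (fun a b => (a : T) < (b : T)) then
    @Ordinal.type {s : T // s < t} (fun a b => (a : T) < (b : T)) h
  else 0

/-- A partial order is a tree iff every set `(·,t)` is well-ordered by `<`. -/
def IsTree (T : Type u) [PartialOrder T] : Prop :=
  ∀ t : T, IsWellOrder {s : T // s < t} (fun a b => (a : T) < (b : T))

/-- A condensation: a bijective endomorphism. -/
def IsCond {T : Type u} [PartialOrder T] (f : T → T) : Prop :=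
  Function.Bijective f ∧ ∀ s t : T, s < t → f s < f t

/-- An automorphism: a bijection preserving and reflecting `<`. -/
def IsAuto {T : Type u} [PartialOrder T] (f : T → T) : Prop :=
  Function.Bijective f ∧ ∀ s t : T, s < t ↔ f s < f t

/-- A structure is reversible iff every condensation is an automorphism. -/
def Reversible (T : Type u) [PartialOrder T] : Prop :=
  ∀ f : T → T, IsCond f → IsAuto f

/-- The `α`-th level: elements of height `α`. -/
def level (T : Type u) [PartialOrder T] (α : Ordinal.{u}) : Set T :=
  {t : T | treeHt t = α}

/-- The height of the tree: the least ordinal `α` with `L_α = ∅`. -/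
noncomputable def treeHeight (T : Type u) [PartialOrder T] : Ordinal.{u} :=
  sInf {α : Ordinal.{u} | level T α = ∅}

/-- Nodes: equivalence classes of the relation `s ∼ t` iff `(·,s) = (·,t)`. -/
def IsNode {T : Type u} [PartialOrder T] (N : Set T) : Prop :=
  ∃ t : T, N = {s : T | Set.Iio s = Set.Iio t}

/-- `S↑`, the upward closure of `S`. -/
def upClo {T : Type u} [PartialOrder T] (S : Set T) : Set T :=
  {t : T | ∃ s ∈ S, s ≤ t}

/-- A branch: a maximal chain. -/
def IsBranch {T : Type u} [PartialOrder T] (b : Set T) : Prop :=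
  IsMaxChain (· ≤ ·) b

/- The height (order type) of a chain (junk value `0` if not well-ordered;
in a tree every chain is well-ordered). -/
open Classical in
noncomputable def chainHt {T : Type u} [PartialOrder T] (b : Set T) : Ordinal.{u} :=
  if h : IsWellOrder b (fun x y : b => (x : T) < (y : T)) then
    @Ordinal.type b (fun x y : b => (x : T) < (y : T)) h
  else 0

variable {T : Type u} [PartialOrder T]

lemma treeHt_def (hT : IsTree T) (t : T) :
    treeHt t = @Ordinal.type {s : T // s < t} (fun a b => (a : T) < (b : T)) (hT t) := by
  unfold treeHt; rw [dif_pos (hT t)]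

lemma treeHt_eq_typein (hT : IsTree T) {s t : T} (hst : s < t) :
    treeHt s = @Ordinal.typein {u : T // u < t} (fun a b => (a : T) < (b : T)) (hT t) ⟨s, hst⟩ := by
  haveI := hT t; haveI := hT s
  rw [treeHt_def hT s,
    ← @Ordinal.type_subrel {u : T // u < t} (fun a b => (a : T) < (b : T)) (hT t) ⟨s, hst⟩]
  refine Eq.symm (Ordinal.type_eq.2 ⟨?_⟩)
  exact ⟨⟨fun b => ⟨(b.1 : T), b.2⟩, fun u => ⟨⟨(u : T), lt_trans u.2 hst⟩, u.2⟩,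
    fun b => rfl, fun u => rfl⟩, Iff.rfl⟩

lemma treeHt_lt_of_lt (hT : IsTree T) {s t : T} (hst : s < t) : treeHt s < treeHt t := by
  haveI := hT t
  rw [treeHt_eq_typein hT hst, treeHt_def hT t]
  exact Ordinal.typein_lt_type _ _

lemma treeHt_le_of_le (hT : IsTree T) {s t : T} (hst : s ≤ t) : treeHt s ≤ treeHt t := by
  rcases eq_or_lt_of_le hst with rfl | h
  · exact le_rfl
  · exact (treeHt_lt_of_lt hT h).le

lemma treeHt_inj_lt (hT : IsTree T) {s₁ s₂ t : T} (h₁ : s₁ < t) (h₂ : s₂ < t)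
    (he : treeHt s₁ = treeHt s₂) : s₁ = s₂ := by
  haveI := hT t
  rw [treeHt_eq_typein hT h₁, treeHt_eq_typein hT h₂] at he
  have := Ordinal.typein_injective _ he
  exact congrArg Subtype.val this

lemma lt_trichotomy_below (hT : IsTree T) {s₁ s₂ t : T} (h₁ : s₁ < t) (h₂ : s₂ < t) :
    s₁ < s₂ ∨ s₁ = s₂ ∨ s₂ < s₁ := by
  haveI := hT t
  rcases trichotomous (r := fun a b : {s : T // s < t} => (a : T) < (b : T)) ⟨s₁, h₁⟩ ⟨s₂, h₂⟩ with h | h | h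
  · exact Or.inl h
  · exact Or.inr (Or.inl (congrArg Subtype.val h))
  · exact Or.inr (Or.inr h)

lemma treeHt_inj_le (hT : IsTree T) {s₁ s₂ t : T} (h₁ : s₁ ≤ t) (h₂ : s₂ ≤ t)
    (he : treeHt s₁ = treeHt s₂) : s₁ = s₂ := by
  rcases eq_or_lt_of_le h₁ with rfl | h₁'
  · rcases eq_or_lt_of_le h₂ with rfl | h₂'
    · rfl
    · exact absurd he (ne_of_lt (treeHt_lt_of_lt hT h₂')).symm
  · rcases eq_or_lt_of_le h₂ with rfl | h₂'
    · exact absurd he (ne_of_lt (treeHt_lt_of_lt hT h₁'))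
    · exact treeHt_inj_lt hT h₁' h₂' he

lemma exists_lt_treeHt (hT : IsTree T) {t : T} {β : Ordinal.{u}} (hβ : β < treeHt t) :
    ∃ s, s < t ∧ treeHt s = β := by
  haveI := hT t
  rw [treeHt_def hT t] at hβ
  obtain ⟨a, ha⟩ := Ordinal.typein_surj _ hβ
  exact ⟨a.1, a.2, (treeHt_eq_typein hT a.2).trans ha⟩

lemma exists_le_treeHt (hT : IsTree T) {t : T} {β : Ordinal.{u}} (hβ : β ≤ treeHt t) :
    ∃ s, s ≤ t ∧ treeHt s = β := by
  rcases eq_or_lt_of_le hβ with rfl | h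
  · exact ⟨t, le_rfl, rfl⟩
  · obtain ⟨s, hs, he⟩ := exists_lt_treeHt hT h
    exact ⟨s, hs.le, he⟩

lemma le_of_le_le_treeHt (hT : IsTree T) {s₁ s₂ t : T} (h₁ : s₁ ≤ t) (h₂ : s₂ ≤ t)
    (hle : treeHt s₁ ≤ treeHt s₂) : s₁ ≤ s₂ := by
  rcases eq_or_lt_of_le h₁ with rfl | h₁'
  · rcases eq_or_lt_of_le h₂ with rfl | h₂'
    · exact le_rfl
    · exact absurd hle (not_le.2 (treeHt_lt_of_lt hT h₂'))
  · rcases eq_or_lt_of_le h₂ with rfl | h₂'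
    · exact h₁'.le
    · rcases lt_trichotomy_below hT h₁' h₂' with h | h | h
      · exact h.le
      · exact h.le
      · exact absurd hle (not_le.2 (treeHt_lt_of_lt hT h))

lemma treeHt_eq_zero_iff (hT : IsTree T) {t : T} : treeHt t = 0 ↔ Set.Iio t = ∅ := by
  haveI := hT t
  rw [treeHt_def hT t, Ordinal.type_eq_zero_iff_isEmpty]
  constructor
  · intro h
    ext s; simp only [Set.mem_Iio, Set.mem_empty_iff_false, iff_false]
    exact fun hs => h.elim ⟨s, hs⟩
  · intro h
    constructor; rintro ⟨s, hs⟩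
    exact Set.eq_empty_iff_forall_notMem.1 h s hs

lemma treeHt_congr (hT : IsTree T) {s t : T} (h : Set.Iio s = Set.Iio t) :
    treeHt s = treeHt t := by
  haveI := hT s; haveI := hT t
  rw [treeHt_def hT s, treeHt_def hT t]
  refine Ordinal.type_eq.2 ⟨?_⟩
  have hmem : ∀ u : T, u < s ↔ u < t := by
    intro u; constructor
    · intro hu; have : u ∈ Set.Iio t := h ▸ hu; exact this
    · intro hu; have : u ∈ Set.Iio s := h.symm ▸ hu; exact this
  exact ⟨⟨fun b => ⟨b.1, (hmem b.1).1 b.2⟩, fun b => ⟨b.1, (hmem b.1).2 b.2⟩,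
    fun b => rfl, fun b => rfl⟩, Iff.rfl⟩

/-! Condensation basics -/

lemma IsCond.treeHt_le (hT : IsTree T) {f : T → T} (hf : IsCond f) (t : T) :
    treeHt t ≤ treeHt (f t) := by
  haveI := hT t; haveI := hT (f t)
  rw [treeHt_def hT t, treeHt_def hT (f t)]
  refine RelEmbedding.ordinal_type_le ⟨⟨fun s => ⟨f s.1, hf.2 s.1 t s.2⟩, ?_⟩, ?_⟩
  · intro a b hab
    have : f a.1 = f b.1 := congrArg Subtype.val hab
    exact Subtype.ext (hf.1.1 this)
  · intro a b
    constructor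
    · intro hab
      rcases lt_trichotomy_below hT a.2 b.2 with h | h | h
      · exact h
      · exact absurd (show f a.1 < f b.1 from hab) (by rw [show a.1 = b.1 from h]; exact lt_irrefl _)
      · exact absurd (lt_trans (show f a.1 < f b.1 from hab) (hf.2 _ _ h)) (lt_irrefl _)
    · intro hab
      exact hf.2 a.1 b.1 hab

/-! Abstract combinatorial core -/

/-- An injective map sending a finite set into itself maps it onto itself. -/
lemma image_eq_of_mapsTo_finite {X : Type v} {φ : X → X} (hinj : Function.Injective φ)
    {K : Set X} (hK : K.Finite) (hm : Set.MapsTo φ K K) : φ '' K = K := by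
  apply Set.eq_of_subset_of_ncard_le (Set.mapsTo_iff_image_subset.1 hm) _ hK
  rw [Set.ncard_image_of_injective K hinj]

lemma eq_on_of_mapsTo_finite {X : Type v} {φ : X → X} (hinj : Function.Injective φ)
    (h : X → ℕ) (hle : ∀ x, h (φ x) ≤ h x)
    {K : Set X} (hK : K.Finite) (hm : Set.MapsTo φ K K) : ∀ x ∈ K, h (φ x) = h x := by
  classical
  by_contra hcon
  push_neg at hcon
  obtain ⟨x₀, hx₀, hne⟩ := hcon
  have him : φ '' K = K := image_eq_of_mapsTo_finite hinj hK hm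
  have hsum : ∑ x ∈ hK.toFinset, h (φ x) = ∑ x ∈ hK.toFinset, h x := by
    rw [← Finset.sum_image (f := h) (g := φ)
      (fun a _ b _ hab => hinj hab)]
    congr 1
    ext y
    simp only [Finset.mem_image, Set.Finite.mem_toFinset]
    constructor
    · rintro ⟨x, hx, rfl⟩; exact him ▸ Set.mem_image_of_mem φ hx
    · intro hy; obtain ⟨x, hx, rfl⟩ := him ▸ hy; exact ⟨x, hx, rfl⟩
  have hlt : ∑ x ∈ hK.toFinset, h (φ x) < ∑ x ∈ hK.toFinset, h x := by
    apply Finset.sum_lt_sum (fun i _ => hle i)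
    exact ⟨x₀, hK.mem_toFinset.2 hx₀, lt_of_le_of_ne (hle x₀) hne⟩
  exact absurd hsum (ne_of_lt hlt)

lemma comb_core {X : Type v} {φ : X → X} (hbij : Function.Bijective φ)
    (h : X → ℕ) (g : X → Cardinal.{u}) (hle : ∀ x, h (φ x) ≤ h x) (hg : ∀ x, g (φ x) = g x)
    (hcase : Finite X ∨ (∃ c : ℕ, {x | h x ≠ c}.Finite) ∨
      (∀ (n : ℕ) (c : Cardinal.{u}), {x | h x = n ∧ g x = c}.Finite)) :
    ∀ x, h (φ x) = h x := by
  rcases hcase with hXfin | ⟨c, hc⟩ | hpair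
  · intro x
    exact eq_on_of_mapsTo_finite hbij.1 h hle (Set.finite_univ (α := X)) (Set.mapsTo_univ φ _)
      x (Set.mem_univ x)
  · -- almost constant case
    set Fm : Set X := {x | h x < c} with hFm
    set Fp : Set X := {x | c < h x} with hFp
    have hFmfin : Fm.Finite := hc.subset (fun x hx => ne_of_lt hx)
    have hFpfin : Fp.Finite := hc.subset (fun x hx => ne_of_gt hx)
    have hFmmap : Set.MapsTo φ Fm Fm := fun x hx => lt_of_le_of_lt (hle x) hx
    have hFmeq : φ '' Fm = Fm := image_eq_of_mapsTo_finite hbij.1 hFmfin hFmmap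
    intro x₀
    by_cases hm : x₀ ∈ Fm
    · exact eq_on_of_mapsTo_finite hbij.1 h hle hFmfin hFmmap x₀ hm
    · -- h x₀ ≥ c
      have hge : c ≤ h x₀ := not_lt.1 hm
      -- φ x₀ not in Fm
      have hpm : φ x₀ ∉ Fm := by
        intro hmem
        rw [← hFmeq] at hmem
        obtain ⟨y, hy, hxy⟩ := hmem
        exact hm (hbij.1 hxy ▸ hy)
      have hge2 : c ≤ h (φ x₀) := not_lt.1 hpm
      -- the inverse maps Fp into Fp
      obtain ⟨ψ, hψl, hψr⟩ := Function.bijective_iff_has_inverse.1 hbij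
      have hψinj : Function.Injective ψ := Function.LeftInverse.injective hψr
      have hψmap : Set.MapsTo ψ Fp Fp := by
        intro x hx
        have : h (φ (ψ x)) ≤ h (ψ x) := hle (ψ x)
        rw [hψr x] at this
        exact lt_of_lt_of_le hx this
      have hψeq : ψ '' Fp = Fp := image_eq_of_mapsTo_finite hψinj hFpfin hψmap
      by_cases hp : φ x₀ ∈ Fp
      · have hφFp : Set.MapsTo φ Fp Fp := by
          intro x hx
          rw [← hψeq] at hx
          obtain ⟨y, hy, rfl⟩ := hx
          rw [hψr y]
          exact hy
        have hx₀p : x₀ ∈ Fp := by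
          have := image_eq_of_mapsTo_finite hbij.1 hFpfin hφFp
          rw [← this] at hp
          obtain ⟨y, hy, hxy⟩ := hp
          exact hbij.1 hxy ▸ hy
        exact eq_on_of_mapsTo_finite hbij.1 h hle hFpfin hφFp x₀ hx₀p
      · -- h (φ x₀) ≤ c and c ≤ h (φ x₀)
        have h1 : h (φ x₀) = c := le_antisymm (not_lt.1 hp) hge2
        -- show h x₀ = c too
        have h2 : h x₀ ≤ c := by
          by_contra hgt
          have hx₀p : x₀ ∈ Fp := lt_of_not_ge hgt
          rw [← hψeq] at hx₀p
          obtain ⟨y, hy, hxy⟩ := hx₀p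
          have : φ x₀ = y := by rw [← hxy, hψr y]
          exact hp (this ▸ hy)
        rw [h1, le_antisymm h2 hge]
  · -- finite-to-one case
    intro x₀
    set K : Set X := {x | g x = g x₀ ∧ h x ≤ h x₀} with hK
    have hKfin : K.Finite := by
      have : K ⊆ ⋃ n ∈ Set.Iic (h x₀), {x | h x = n ∧ g x = g x₀} := by
        intro x hx
        simp only [Set.mem_iUnion, Set.mem_Iic, Set.mem_setOf_eq]
        exact ⟨h x, hx.2, rfl, hx.1⟩
      exact ((Set.finite_Iic (h x₀)).biUnion (fun n _ => hpair n (g x₀))).subset this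
    have hKmap : Set.MapsTo φ K K := fun x hx => ⟨(hg x).trans hx.1, le_trans (hle x) hx.2⟩
    exact eq_on_of_mapsTo_finite hbij.1 h hle hKfin hKmap x₀ ⟨rfl, le_rfl⟩

/-! Nodes -/

def nodeOf (t : T) : Set T := {s : T | Set.Iio s = Set.Iio t}

lemma mem_nodeOf_self (t : T) : t ∈ nodeOf t := rfl

lemma isNode_nodeOf (t : T) : IsNode (nodeOf t) := ⟨t, rfl⟩

lemma nodeOf_eq_of_mem {s t : T} (h : s ∈ nodeOf t) : nodeOf s = nodeOf t := by
  have hs : Set.Iio s = Set.Iio t := h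
  ext u
  simp only [nodeOf, Set.mem_setOf_eq, hs]

lemma treeHt_eq_of_mem_nodeOf (hT : IsTree T) {s t : T} (h : s ∈ nodeOf t) :
    treeHt s = treeHt t := treeHt_congr hT h

lemma nodeOf_subset_level (hT : IsTree T) {t : T} {α : Ordinal.{u}} (ht : treeHt t = α) :
    nodeOf t ⊆ level T α := fun s hs => (treeHt_eq_of_mem_nodeOf hT hs).trans ht

lemma node_eq_nodeOf {N : Set T} (hN : IsNode N) {t : T} (ht : t ∈ N) : N = nodeOf t := by
  obtain ⟨t₀, rfl⟩ := hN
  have h : Set.Iio t = Set.Iio t₀ := ht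
  ext s
  simp only [nodeOf, Set.mem_setOf_eq, h]

/-! The induction step machinery -/

section Step

variable {f : T → T} {α : Ordinal.{u}}

/-- elements below `f t` of small height are images of elements below `t`. -/
lemma step_chain (hT : IsTree T) (hf : IsCond f)
    (IH : ∀ s, treeHt s < α → treeHt (f s) = treeHt s)
    {t : T} (hα : α ≤ treeHt t) {v : T} (hv : v < f t) (hvα : treeHt v < α) :
    ∃ s, s < t ∧ f s = v := by
  obtain ⟨s, hst, hs⟩ := exists_lt_treeHt hT (lt_of_lt_of_le hvα hα)
  refine ⟨s, hst, ?_⟩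
  have h1 : treeHt (f s) = treeHt s := IH s (by rw [hs]; exact hvα)
  exact treeHt_inj_lt hT (hf.2 s t hst) hv (h1.trans hs)

/-- the set below the height-`α` element under `f t` is exactly the image of the set below `t`. -/
lemma step_Iio_image (hT : IsTree T) (hf : IsCond f)
    (IH : ∀ s, treeHt s < α → treeHt (f s) = treeHt s)
    {t : T} (ht : treeHt t = α) {u : T} (hu : u ≤ f t) (huα : treeHt u = α) :
    Set.Iio u = f '' Set.Iio t := by
  ext v
  simp only [Set.mem_Iio, Set.mem_image]
  constructor
  · intro hvu
    have hvft : v < f t := lt_of_lt_of_le hvu hu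
    have hvα : treeHt v < α := huα ▸ treeHt_lt_of_lt hT hvu
    obtain ⟨s, hst, hfs⟩ := step_chain hT hf IH (le_of_eq ht.symm) hvft hvα
    exact ⟨s, hst, hfs⟩
  · rintro ⟨s, hst, rfl⟩
    have hsα : treeHt s < α := ht ▸ treeHt_lt_of_lt hT hst
    have h1 : treeHt (f s) = treeHt s := IH s hsα
    have h2 : f s < f t := hf.2 s t hst
    -- f s and u both ≤ f t, with treeHt (f s) < treeHt u
    have h3 : f s ≤ u := le_of_le_le_treeHt hT h2.le hu (by rw [h1, huα]; exact hsα.le)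
    rcases eq_or_lt_of_le h3 with heq | hlt
    · exfalso
      have : α = treeHt s := by rw [← huα, ← heq, h1]
      exact absurd (this ▸ hsα) (lt_irrefl α)
    · exact hlt

lemma mk_coe_eq_ncard {s : Set T} (hs : s.Finite) :
    Cardinal.mk ↥s = (s.ncard : Cardinal.{u}) := by
  haveI := hs.to_subtype
  rw [← Nat.card_coe_set_eq]
  rw [Nat.card, Cardinal.cast_toNat_of_lt_aleph0 (Cardinal.lt_aleph0_of_finite ↥s)]

lemma f_mono_le (hf : IsCond f) {a b : T} (h : a ≤ b) : f a ≤ f b := by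
  rcases eq_or_lt_of_le h with rfl | h'
  · exact le_rfl
  · exact (hf.2 a b h').le

lemma step_main (hT : IsTree T) (hfin : ∀ N : Set T, IsNode N → N.Finite)
    (hf : IsCond f)
    (IH : ∀ s, treeHt s < α → treeHt (f s) = treeHt s)
    (hcase : {N : Set T | IsNode N ∧ N ⊆ level T α}.Finite ∨
      (∃ c : Cardinal.{u},
        {N : Set T | IsNode N ∧ N ⊆ level T α ∧ Cardinal.mk ↥N ≠ c}.Finite) ∨
      (∀ c₁ c₂ : Cardinal.{u},
        {N : Set T | IsNode N ∧ N ⊆ level T α ∧ Cardinal.mk ↥N = c₁ ∧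
          Cardinal.mk ↥(upClo N) = c₂}.Finite)) :
    ∀ t, treeHt t = α → treeHt (f t) = α := by
  classical
  set 𝒩 : Set (Set T) := {N : Set T | IsNode N ∧ N ⊆ level T α} with h𝒩
  -- basic facts
  have hA : ∀ t : T, treeHt t = α → α ≤ treeHt (f t) := fun t ht => ht ▸ hf.treeHt_le hT t
  have hpre : ∀ w : T, treeHt (f w) = α → treeHt w = α := by
    intro w hw
    rcases lt_or_eq_of_le (hw ▸ hf.treeHt_le hT w) with hlt | heq
    · exfalso
      have h2 := IH w hlt
      rw [hw] at h2
      exact absurd hlt (by rw [← h2]; exact lt_irrefl α)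
    · exact heq
  have hhigh : ∀ w : T, α ≤ treeHt (f w) → α ≤ treeHt w := by
    intro w hw
    by_contra hcon
    push_neg at hcon
    rw [IH w hcon] at hw
    exact absurd (lt_of_le_of_lt hw hcon) (lt_irrefl _)
  -- representatives
  have hrep : ∀ N : ↥𝒩, ∃ t : T, t ∈ N.1 ∧ treeHt t = α := by
    rintro ⟨N, hN1, hN2⟩
    obtain ⟨t₀, rfl⟩ := hN1
    exact ⟨t₀, rfl, hN2 rfl⟩
  choose tN htN1 htN2 using hrep
  have huex : ∀ N : ↥𝒩, ∃ u : T, u ≤ f (tN N) ∧ treeHt u = α :=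
    fun N => exists_le_treeHt hT (hA (tN N) (htN2 N))
  choose uN huN1 huN2 using huex
  set φ : ↥𝒩 → ↥𝒩 := fun N =>
    ⟨nodeOf (uN N), isNode_nodeOf _, nodeOf_subset_level hT (huN2 N)⟩ with hφ
  -- N.1 is the node of any of its members
  have hnode : ∀ (N : ↥𝒩) (t : T), t ∈ N.1 → N.1 = nodeOf t :=
    fun N t ht => node_eq_nodeOf N.2.1 ht
  have hmemht : ∀ (N : ↥𝒩) (t : T), t ∈ N.1 → treeHt t = α := fun N t ht => N.2.2 ht
  have hIuN : ∀ N : ↥𝒩, Set.Iio (uN N) = f '' Set.Iio (tN N) :=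
    fun N => step_Iio_image hT hf IH (htN2 N) (huN1 N) (huN2 N)
  -- characterization of φ
  have hchar : ∀ (N : ↥𝒩) (t u : T), t ∈ N.1 → u ≤ f t → treeHt u = α →
      (φ N).1 = nodeOf u ∧ Set.Iio u = f '' Set.Iio t := by
    intro N t u ht hu huα
    have hIu : Set.Iio u = f '' Set.Iio t :=
      step_Iio_image hT hf IH (hmemht N t ht) hu huα
    refine ⟨?_, hIu⟩
    have h1 : Set.Iio t = Set.Iio (tN N) := by
      have := hnode N t ht ▸ htN1 N
      exact (this : Set.Iio (tN N) = Set.Iio t).symm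
    have h2 : Set.Iio u = Set.Iio (uN N) := by rw [hIu, h1, ← hIuN N]
    ext x
    simp only [hφ, nodeOf, Set.mem_setOf_eq, h2]
  have hφval : ∀ N : ↥𝒩, (φ N).1 = nodeOf (uN N) := fun N => rfl
  -- injectivity
  have hinj : Function.Injective φ := by
    intro N₁ N₂ he
    have h1 : nodeOf (uN N₁) = nodeOf (uN N₂) := congrArg Subtype.val he
    have h2 : Set.Iio (uN N₁) = Set.Iio (uN N₂) := by
      have : uN N₁ ∈ nodeOf (uN N₂) := h1 ▸ mem_nodeOf_self (uN N₁)
      exact this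
    rw [hIuN N₁, hIuN N₂] at h2
    have h3 : Set.Iio (tN N₁) = Set.Iio (tN N₂) := Set.image_injective.2 hf.1.1 h2
    apply Subtype.ext
    rw [hnode N₁ (tN N₁) (htN1 N₁), hnode N₂ (tN N₂) (htN1 N₂)]
    ext x
    simp only [nodeOf, Set.mem_setOf_eq, h3]
  -- surjectivity
  have hsurj : Function.Surjective φ := by
    intro M
    obtain ⟨w, hw⟩ := hf.1.2 (tN M)
    have hwα : treeHt w = α := hpre w (by rw [hw]; exact htN2 M)
    refine ⟨⟨nodeOf w, isNode_nodeOf w, nodeOf_subset_level hT hwα⟩, ?_⟩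
    have := hchar ⟨nodeOf w, isNode_nodeOf w, nodeOf_subset_level hT hwα⟩
      w (tN M) (mem_nodeOf_self w) (le_of_eq hw.symm) (htN2 M)
    apply Subtype.ext
    rw [this.1, ← hnode M (tN M) (htN1 M)]
  -- φ N ⊆ f '' N
  have hsub : ∀ N : ↥𝒩, (φ N).1 ⊆ f '' N.1 := by
    intro N x hx
    have hxα : treeHt x = α := (φ N).2.2 hx
    obtain ⟨w, hw⟩ := hf.1.2 x
    have hwα : treeHt w = α := hpre w (by rw [hw]; exact hxα)
    have hIx : Set.Iio x = f '' Set.Iio w :=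
      step_Iio_image hT hf IH hwα (le_of_eq hw.symm) hxα
    have hxnode : Set.Iio x = Set.Iio (uN N) := hx
    have h2 : f '' Set.Iio w = f '' Set.Iio (tN N) := by rw [← hIx, hxnode, hIuN N]
    have h3 : Set.Iio w = Set.Iio (tN N) := Set.image_injective.2 hf.1.1 h2
    have : w ∈ N.1 := by rw [hnode N (tN N) (htN1 N)]; exact h3
    exact ⟨w, this, hw⟩
  -- cardinal inequality
  have hle : ∀ N : ↥𝒩, (φ N).1.ncard ≤ N.1.ncard := by
    intro N
    have hNfin : N.1.Finite := hfin N.1 N.2.1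
    calc (φ N).1.ncard ≤ (f '' N.1).ncard :=
          Set.ncard_le_ncard (hsub N) (hNfin.image f)
      _ = N.1.ncard := Set.ncard_image_of_injective _ hf.1.1
  -- upward closures
  have hup : ∀ N : ↥𝒩, upClo (φ N).1 = f '' upClo N.1 := by
    intro N
    ext v
    constructor
    · rintro ⟨x, hx, hxv⟩
      have hxα : treeHt x = α := (φ N).2.2 hx
      have hαv : α ≤ treeHt v := hxα ▸ treeHt_le_of_le hT hxv
      obtain ⟨w'', hw''⟩ := hf.1.2 v
      have hw''α : α ≤ treeHt w'' := hhigh w'' (by rw [hw'']; exact hαv)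
      obtain ⟨w', hw'le, hw'α⟩ := exists_le_treeHt hT hw''α
      have hfw' : f w' ≤ v := hw'' ▸ f_mono_le hf hw'le
      obtain ⟨u₀, hu₀le, hu₀α⟩ := exists_le_treeHt hT (hA w' hw'α)
      have hu₀v : u₀ ≤ v := le_trans hu₀le hfw'
      have hxu₀ : x = u₀ := treeHt_inj_le hT hxv hu₀v (hxα.trans hu₀α.symm)
      have hIu₀ : Set.Iio u₀ = f '' Set.Iio w' :=
        step_Iio_image hT hf IH hw'α hu₀le hu₀α
      have hxnode : Set.Iio x = Set.Iio (uN N) := hx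
      have h2 : f '' Set.Iio w' = f '' Set.Iio (tN N) := by
        rw [← hIu₀, ← hxu₀, hxnode, hIuN N]
      have h3 : Set.Iio w' = Set.Iio (tN N) := Set.image_injective.2 hf.1.1 h2
      have hw'N : w' ∈ N.1 := by rw [hnode N (tN N) (htN1 N)]; exact h3
      exact ⟨w'', ⟨w', hw'N, hw'le⟩, hw''⟩
    · rintro ⟨w'', ⟨s, hsN, hsw⟩, rfl⟩
      have hsα : treeHt s = α := hmemht N s hsN
      have hfs : f s ≤ f w'' := f_mono_le hf hsw
      obtain ⟨u₀, hu₀le, hu₀α⟩ := exists_le_treeHt hT (hA s hsα)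
      have hIu₀ : Set.Iio u₀ = f '' Set.Iio s :=
        step_Iio_image hT hf IH hsα hu₀le hu₀α
      have hsnode : Set.Iio s = Set.Iio (tN N) := by
        have : s ∈ nodeOf (tN N) := hnode N (tN N) (htN1 N) ▸ hsN
        exact this
      have hmem : u₀ ∈ (φ N).1 := by
        show Set.Iio u₀ = Set.Iio (uN N)
        rw [hIu₀, hsnode, ← hIuN N]
      exact ⟨u₀, hmem, le_trans hu₀le hfs⟩
  have hg : ∀ N : ↥𝒩, Cardinal.mk ↥(upClo (φ N).1) = Cardinal.mk ↥(upClo N.1) := by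
    intro N
    rw [hup N]
    exact Cardinal.mk_image_eq hf.1.1
  -- translate hcase and apply comb_core
  have hcases' : Finite ↥𝒩 ∨ (∃ c : ℕ, {x : ↥𝒩 | x.1.ncard ≠ c}.Finite) ∨
      (∀ (n : ℕ) (c : Cardinal.{u}),
        {x : ↥𝒩 | x.1.ncard = n ∧ Cardinal.mk ↥(upClo x.1) = c}.Finite) := by
    rcases hcase with h0 | ⟨c, hc⟩ | hpair
    · exact Or.inl h0.to_subtype
    · by_cases hn : ∃ n : ℕ, c = (n : Cardinal.{u})
      · obtain ⟨n, rfl⟩ := hn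
        refine Or.inr (Or.inl ⟨n, ?_⟩)
        have : {x : ↥𝒩 | x.1.ncard ≠ n} ⊆
            Subtype.val ⁻¹' {N : Set T | IsNode N ∧ N ⊆ level T α ∧
              Cardinal.mk ↥N ≠ (n : Cardinal.{u})} := by
          intro x hx
          refine ⟨x.2.1, x.2.2, ?_⟩
          rw [mk_coe_eq_ncard (hfin x.1 x.2.1)]
          exact fun hcast => hx (Nat.cast_injective hcast)
        exact (hc.preimage (Subtype.val_injective.injOn)).subset this
      · left
        have : 𝒩 ⊆ {N : Set T | IsNode N ∧ N ⊆ level T α ∧ Cardinal.mk ↥N ≠ c} := by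
          intro N hN
          refine ⟨hN.1, hN.2, ?_⟩
          rw [mk_coe_eq_ncard (hfin N hN.1)]
          exact fun hcast => hn ⟨N.ncard, hcast.symm⟩
        exact (hc.subset this).to_subtype
    · refine Or.inr (Or.inr ?_)
      intro n c
      have : {x : ↥𝒩 | x.1.ncard = n ∧ Cardinal.mk ↥(upClo x.1) = c} ⊆
          Subtype.val ⁻¹' {N : Set T | IsNode N ∧ N ⊆ level T α ∧
            Cardinal.mk ↥N = (n : Cardinal.{u}) ∧ Cardinal.mk ↥(upClo N) = c} := by
        intro x hx
        refine ⟨x.2.1, x.2.2, ?_, hx.2⟩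
        rw [mk_coe_eq_ncard (hfin x.1 x.2.1), hx.1]
      exact ((hpair (n : Cardinal.{u}) c).preimage (Subtype.val_injective.injOn)).subset this
  have hkey : ∀ N : ↥𝒩, (φ N).1.ncard = N.1.ncard :=
    comb_core ⟨hinj, hsurj⟩ (fun N => N.1.ncard)
      (fun N => Cardinal.mk ↥(upClo N.1)) hle hg hcases'
  -- conclusion
  intro t ht
  set N : ↥𝒩 := ⟨nodeOf t, isNode_nodeOf t, nodeOf_subset_level hT ht⟩ with hNdef
  have hNfin : N.1.Finite := hfin N.1 N.2.1
  have heq : f '' N.1 = (φ N).1 := by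
    apply (Set.eq_of_subset_of_ncard_le (hsub N) _ (hNfin.image f)).symm
    rw [hkey N, Set.ncard_image_of_injective _ hf.1.1]
  have : f t ∈ (φ N).1 := heq ▸ Set.mem_image_of_mem f (mem_nodeOf_self t)
  exact (φ N).2.2 this

end Step

/-! Finite levels -/

lemma level_nat_finite (hT : IsTree T) (hfin : ∀ N : Set T, IsNode N → N.Finite) :
    ∀ n : ℕ, (level T (n : Ordinal.{u})).Finite := by
  intro n
  induction n with
  | zero =>
    rcases Set.eq_empty_or_nonempty (level T ((0 : ℕ) : Ordinal.{u})) with he | ⟨t₀, ht₀⟩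
    · rw [he]; exact Set.finite_empty
    · have h0 : treeHt t₀ = 0 := ht₀
      have : level T ((0 : ℕ) : Ordinal.{u}) = nodeOf t₀ := by
        ext s
        constructor
        · intro hs
          show Set.Iio s = Set.Iio t₀
          rw [(treeHt_eq_zero_iff hT).1 hs, (treeHt_eq_zero_iff hT).1 h0]
        · intro hs
          show treeHt s = ((0 : ℕ) : Ordinal.{u})
          rw [treeHt_congr hT hs]
          exact h0
      rw [this]
      exact hfin _ (isNode_nodeOf t₀)
  | succ n ihn =>
    have hcast : ((n + 1 : ℕ) : Ordinal.{u}) = (n : Ordinal.{u}) + 1 := by push_cast; rfl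
    have hsub : level T ((n + 1 : ℕ) : Ordinal.{u}) ⊆
        ⋃ m ∈ level T (n : Ordinal.{u}), {s : T | Set.Iio s = Set.Iic m} := by
      intro t ht
      have htn : treeHt t = (n : Ordinal.{u}) + 1 := hcast ▸ ht
      have hlt : (n : Ordinal.{u}) < treeHt t := by
        rw [htn, Ordinal.add_one_eq_succ]; exact Order.lt_succ _
      obtain ⟨m, hmt, hm⟩ := exists_lt_treeHt hT hlt
      have hIio : Set.Iio t = Set.Iic m := by
        ext s
        simp only [Set.mem_Iio, Set.mem_Iic]
        constructor
        · intro hst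
          apply le_of_le_le_treeHt hT hst.le hmt.le
          rw [hm]
          have : treeHt s < (n : Ordinal.{u}) + 1 := htn ▸ treeHt_lt_of_lt hT hst
          rw [Ordinal.add_one_eq_succ, Order.lt_succ_iff] at this
          exact this
        · intro hsm
          exact lt_of_le_of_lt hsm hmt
      exact Set.mem_biUnion hm hIio
    refine (Set.Finite.biUnion ihn ?_).subset hsub
    intro m _
    rcases Set.eq_empty_or_nonempty {s : T | Set.Iio s = Set.Iic m} with he | ⟨t₁, ht₁⟩
    · rw [he]; exact Set.finite_empty
    · have : {s : T | Set.Iio s = Set.Iic m} = nodeOf t₁ := by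
        have h1 : Set.Iio t₁ = Set.Iic m := ht₁
        ext s
        simp only [Set.mem_setOf_eq, nodeOf, h1]
      rw [this]
      exact hfin _ (isNode_nodeOf t₁)

lemma nodes_finite_of_level_finite {β : Ordinal.{u}} (hβ : (level T β).Finite) :
    {N : Set T | IsNode N ∧ N ⊆ level T β}.Finite :=
  hβ.finite_subsets.subset (fun _ hN => hN.2)

lemma lt_treeHeight_of_nonempty (hT : IsTree T) {α : Ordinal.{u}}
    (hne : (level T α).Nonempty) : α < treeHeight T := by
  have hS : {β : Ordinal.{u} | level T β = ∅}.Nonempty := by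
    refine ⟨(⨆ t : T, treeHt t) + 1, ?_⟩
    ext t
    simp only [level, Set.mem_setOf_eq, Set.mem_empty_iff_false, iff_false]
    intro hcon
    have h1 : treeHt t ≤ ⨆ t : T, treeHt t := Ordinal.le_iSup (fun t : T => treeHt t) t
    rw [hcon] at h1
    exact absurd h1 (not_le.2 (Order.lt_add_one_iff.2 le_rfl))
  have hmem : level T (treeHeight T) = ∅ := csInf_mem hS
  by_contra hcon
  push_neg at hcon
  obtain ⟨t, ht⟩ := hne
  have : treeHeight T ≤ treeHt t := by rw [show treeHt t = α from ht]; exact hcon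
  obtain ⟨s, _, hs⟩ := exists_le_treeHt hT this
  exact Set.eq_empty_iff_forall_notMem.1 hmem s hs

theorem stmt12' {T : Type u} [PartialOrder T] (hT : IsTree T)
    (hfin : ∀ N : Set T, IsNode N → N.Finite)
    (h : ∀ α : Ordinal.{u}, Ordinal.omega0 ≤ α → α < treeHeight T →
      (∃ c : Cardinal.{u},
        {N : Set T | IsNode N ∧ N ⊆ level T α ∧ Cardinal.mk ↥N ≠ c}.Finite) ∨
      (∀ c₁ c₂ : Cardinal.{u},
        {N : Set T | IsNode N ∧ N ⊆ level T α ∧ Cardinal.mk ↥N = c₁ ∧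
          Cardinal.mk ↥(upClo N) = c₂}.Finite)) :
    Reversible T := by
  intro f hf
  have main : ∀ α : Ordinal.{u}, ∀ t : T, treeHt t = α → treeHt (f t) = α := by
    intro α
    induction α using Ordinal.induction with
    | h α IH' =>
    have IH : ∀ s, treeHt s < α → treeHt (f s) = treeHt s := fun s hs => IH' _ hs s rfl
    intro t ht
    have hne : (level T α).Nonempty := ⟨t, ht⟩
    have hαht : α < treeHeight T := lt_treeHeight_of_nonempty hT hne
    rcases lt_or_ge α Ordinal.omega0 with hsmall | hbig
    · obtain ⟨n, rfl⟩ := Ordinal.lt_omega0.1 hsmall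
      exact step_main hT hfin hf IH
        (Or.inl (nodes_finite_of_level_finite (level_nat_finite hT hfin n))) t ht
    · rcases h α hbig hαht with hc | hc
      · exact step_main hT hfin hf IH (Or.inr (Or.inl hc)) t ht
      · exact step_main hT hfin hf IH (Or.inr (Or.inr hc)) t ht
  refine ⟨hf.1, fun s t => ⟨hf.2 s t, ?_⟩⟩
  intro hlt
  have h1 : treeHt s < treeHt t := by
    have := treeHt_lt_of_lt hT hlt
    rw [main _ s rfl, main _ t rfl] at this
    exact this
  obtain ⟨s', hs't, hs'⟩ := exists_lt_treeHt hT h1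
  have h2 : treeHt (f s') = treeHt (f s) := by
    rw [main _ s' rfl, main _ s rfl, hs']
  have h3 : f s' = f s := treeHt_inj_lt hT (hf.2 s' t hs't) hlt h2
  rw [hf.1.1 h3] at hs't
  exact hs't

/-- Let `T` be a tree all of whose nodes are finite. If for every
ordinal `α` with `ω ≤ α < ht(T)` either the sequence `⟨|N| : N a node, N ⊆ L_α⟩` is
almost constant (all but finitely many nodes `N ⊆ L_α` have the same cardinality),
or the map `N ↦ (|N|, |N↑|)` on nodes `N ⊆ L_α` is finite-to-one (every pair of
cardinals is realized by only finitely many such nodes), then `T` is reversible. -/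
theorem stmt12 {T : Type u} [PartialOrder T] (hT : IsTree T)
    (hfin : ∀ N : Set T, IsNode N → N.Finite)
    (h : ∀ α : Ordinal.{u}, Ordinal.omega0 ≤ α → α < treeHeight T →
      (∃ c : Cardinal.{u},
        {N : Set T | IsNode N ∧ N ⊆ level T α ∧ Cardinal.mk ↥N ≠ c}.Finite) ∨
      (∀ c₁ c₂ : Cardinal.{u},
        {N : Set T | IsNode N ∧ N ⊆ level T α ∧ Cardinal.mk ↥N = c₁ ∧
          Cardinal.mk ↥(upClo N) = c₂}.Finite)) :
    Reversible T := stmt12' hT hfin h
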